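/- arXiv:2405.11774 — 3 statements merged into one kernel-verified Lean document; each statement's English description precedes it below -/
import Mathlib

section
/- Let r, s be continuous functions on closure Ω with r > 0, inf_{closure Ω}(α − r) > 0, s > 0, and inf_{closure Ω}(β − s) > 0. Then for every u ∈ L^Ψ(Ω): ‖ w₁^{r/α} |u|^{r} ‖_{L^{α(·)/r(·)}(Ω)} ≤ 1 + ‖u‖_Ψ^{r⁺} and ‖ w₂^{s/β} |u|^{s} ‖_{L^{β(·)/s(·)}(Ω)} ≤ 1 + ‖u‖_Ψ^{s⁺}, where r⁺ := sup r and s⁺ := sup s. -/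
open MeasureTheory Filter Topology Set NNReal ENNReal

noncomputable section

namespace DoublePhase

/-- `N`-dimensional Euclidean space. -/
abbrev Euc (N : ℕ) := EuclideanSpace ℝ (Fin N)

variable {N : ℕ}

/-- The double phase function `H(x,t) = t^{p(x)} + a(x) t^{q(x)}`. -/
def Hfun (p q a : Euc N → ℝ) (x : Euc N) (t : ℝ) : ℝ :=
  t ^ p x + a x * t ^ q x

/-- Sobolev conjugate exponent `h*(x) = N h(x) / (N - h(x))`. -/
def sconj (h : Euc N → ℝ) : Euc N → ℝ :=
  fun x => (N : ℝ) * h x / ((N : ℝ) - h x)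

/-- `G*(x,t) = t^{p*(x)} + a(x)^{q*(x)/q(x)} t^{q*(x)}`. -/
def Gstar (p q a : Euc N → ℝ) (x : Euc N) (t : ℝ) : ℝ :=
  t ^ sconj p x + a x ^ (sconj q x / q x) * t ^ sconj q x

/-- `B(x,t) = c₁(x) t^{r(x)} + c₂(x) a(x)^{s(x)/q(x)} t^{s(x)}`. -/
def Bfun (c₁ c₂ a q r s : Euc N → ℝ) (x : Euc N) (t : ℝ) : ℝ :=
  c₁ x * t ^ r x + c₂ x * a x ^ (s x / q x) * t ^ s x

/-- The cone property: every point of `Ω` is the vertex of a fixed-size cone included in `Ω`. -/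
def HasConeProperty (Ω : Set (Euc N)) : Prop :=
  ∃ r h : ℝ, 0 < r ∧ 0 < h ∧ ∀ x ∈ Ω, ∃ v : Euc N, ‖v‖ = 1 ∧
    ∀ t ∈ Set.Ioc (0 : ℝ) h, ∀ z : Euc N, ‖z‖ ≤ r * t → x + t • v + z ∈ Ω

/-- Assumption (A). -/
structure AssumptionA (Ω : Set (Euc N)) (p q a : Euc N → ℝ) : Prop where
  dim : 2 ≤ N
  lip_p : ∃ K : ℝ≥0, LipschitzOnWith K p (closure Ω)
  lip_q : ∃ K : ℝ≥0, LipschitzOnWith K q (closure Ω)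
  lip_a : ∃ K : ℝ≥0, LipschitzOnWith K a (closure Ω)
  p_gt_one : ∃ c : ℝ, 1 < c ∧ ∀ x ∈ closure Ω, c ≤ p x
  p_lt_q : ∀ x ∈ closure Ω, p x < q x
  q_lt_dim : ∀ x ∈ closure Ω, q x < N
  gap : ∃ ε : ℝ, 0 < ε ∧ ∀ x ∈ closure Ω, q x + ε ≤ p x * ((N : ℝ) + 1) / N
  a_nonneg : ∀ x ∈ closure Ω, 0 ≤ a x
  a_bdd : ∃ M : ℝ, ∀ x ∈ closure Ω, a x ≤ M

/-- `g` is the weak (distributional) gradient of `u` on `Ω`, with `u, g ∈ L¹_loc(Ω)`. -/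
def HasWeakGradOn (Ω : Set (Euc N)) (u : Euc N → ℝ) (g : Euc N → Euc N) : Prop :=
  LocallyIntegrableOn u Ω volume ∧ LocallyIntegrableOn g Ω volume ∧
    ∀ φ : Euc N → ℝ, ContDiff ℝ (⊤ : ℕ∞) φ → HasCompactSupport φ → tsupport φ ⊆ Ω →
      ∀ i : Fin N,
        (∫ x in Ω, u x * fderiv ℝ φ x (EuclideanSpace.single i 1))
          = - ∫ x in Ω, g x i * φ x

/-- The modular `∫_Ω H(x,|u|) dx`. -/
def modH (Ω : Set (Euc N)) (p q a : Euc N → ℝ) (u : Euc N → ℝ) : ℝ≥0∞ :=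
  ∫⁻ x in Ω, ENNReal.ofReal (Hfun p q a x |u x|)

/-- The modular `∫_Ω H(x,|g|) dx` for a vector field `g`. -/
def modHgrad (Ω : Set (Euc N)) (p q a : Euc N → ℝ) (g : Euc N → Euc N) : ℝ≥0∞ :=
  ∫⁻ x in Ω, ENNReal.ofReal (Hfun p q a x ‖g x‖)

/-- The Luxemburg norm associated with a Musielak–Orlicz function `Φ` on `Ω`. -/
def luxNorm (Ω : Set (Euc N)) (Φ : Euc N → ℝ → ℝ) (u : Euc N → ℝ) : ℝ :=
  sInf {τ : ℝ | 0 < τ ∧ (∫⁻ x in Ω, ENNReal.ofReal (Φ x (|u x| / τ))) ≤ 1}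

/-- The `W^{1,H}(Ω)` norm of a pair (function, weak gradient). -/
def w1hNorm (Ω : Set (Euc N)) (p q a : Euc N → ℝ) (u : Euc N → ℝ) (g : Euc N → Euc N) : ℝ :=
  sInf {τ : ℝ | 0 < τ ∧
    (∫⁻ x in Ω, ENNReal.ofReal (Hfun p q a x (‖g x‖ / τ) + Hfun p q a x (|u x| / τ))) ≤ 1}

/-- `Ψ(x,t) = w₁(x) t^{α(x)} + w₂(x) t^{β(x)}`. -/
def Psi (w₁ w₂ α β : Euc N → ℝ) (x : Euc N) (t : ℝ) : ℝ :=
  w₁ x * t ^ α x + w₂ x * t ^ β x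

/-- The modular `ρ_Ψ(u) = ∫_Ω Ψ(x,|u|) dx`. -/
def psiMod (Ω : Set (Euc N)) (w₁ w₂ α β : Euc N → ℝ) (u : Euc N → ℝ) : ℝ≥0∞ :=
  ∫⁻ x in Ω, ENNReal.ofReal (Psi w₁ w₂ α β x |u x|)

/-- The Luxemburg norm of `L^Ψ(Ω)`. -/
def psiNorm (Ω : Set (Euc N)) (w₁ w₂ α β : Euc N → ℝ) (u : Euc N → ℝ) : ℝ :=
  luxNorm Ω (Psi w₁ w₂ α β) u

/-- The standing hypotheses on the generalized double phase integrand `Ψ`. -/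
structure PsiSetting (Ω : Set (Euc N)) (w₁ w₂ α β : Euc N → ℝ) : Prop where
  isOpen : IsOpen Ω
  α_cont : ContinuousOn α (closure Ω)
  β_cont : ContinuousOn β (closure Ω)
  α_lb : ∃ c : ℝ, 1 < c ∧ ∀ x ∈ closure Ω, c ≤ α x
  α_ub : ∃ M : ℝ, ∀ x ∈ closure Ω, α x ≤ M
  β_lb : ∃ c : ℝ, 1 < c ∧ ∀ x ∈ closure Ω, c ≤ β x
  β_ub : ∃ M : ℝ, ∀ x ∈ closure Ω, β x ≤ M
  α_lt_β : ∀ x ∈ closure Ω, α x < β x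
  w₁_meas : AEMeasurable w₁ (volume.restrict Ω)
  w₂_meas : AEMeasurable w₂ (volume.restrict Ω)
  w₁_pos : ∀ᵐ x ∂volume.restrict Ω, 0 < w₁ x
  w₂_nonneg : ∀ᵐ x ∂volume.restrict Ω, 0 ≤ w₂ x
  w₁_cls : Integrable w₁ (volume.restrict Ω) ∨ ∃ M : ℝ, ∀ᵐ x ∂volume.restrict Ω, w₁ x ≤ M
  w₂_cls : Integrable w₂ (volume.restrict Ω) ∨ ∃ M : ℝ, ∀ᵐ x ∂volume.restrict Ω, w₂ x ≤ M

/-- Assumption (V₁). -/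
structure AssumptionV1 (V : Euc N → ℝ) : Prop where
  locInt : LocallyIntegrable V volume
  nonneg : ∀ᵐ x ∂(volume : Measure (Euc N)), 0 ≤ V x
  nontrivial : ¬ V =ᵐ[(volume : Measure (Euc N))] (fun _ => (0 : ℝ))
  alt : (∃ K₀ : ℝ, 0 < K₀ ∧ {x : Euc N | V x < K₀}.Nonempty ∧ volume {x : Euc N | V x < K₀} < ⊤)
      ∨ (∃ R₀ V₀ : ℝ, 0 < R₀ ∧ 0 < V₀ ∧ ∀ᵐ x ∂(volume : Measure (Euc N)), R₀ < ‖x‖ → V₀ ≤ V x)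

/-- Condition (P): the log-Hölder decay condition on `p`. -/
def CondP (p : Euc N → ℝ) : Prop :=
  ∃ pinf : ℝ, 1 < pinf ∧ pinf < N ∧
    ∃ M : ℝ, ∀ x : Euc N, |p x - pinf| * Real.log (Real.exp 1 + ‖x‖) ≤ M

/-- Assumption (O). -/
structure AssumptionO (p q a V : Euc N → ℝ) : Prop where
  hA : AssumptionA (Set.univ : Set (Euc N)) p q a
  hV : AssumptionV1 V
  hP : essInf V volume = 0 → CondP p

/-- The modular `ρ_V(u) = ∫ H(x,|∇u|) + V(x) H(x,|u|) dx` on pairs. -/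
def rhoV (p q a V : Euc N → ℝ) (u : Euc N → ℝ) (g : Euc N → Euc N) : ℝ≥0∞ :=
  ∫⁻ x, ENNReal.ofReal (Hfun p q a x ‖g x‖ + V x * Hfun p q a x |u x|)

/-- The `W^{1,H}_V(ℝ^N)` (Luxemburg) norm on pairs (function, weak gradient). -/
def vNorm (p q a V : Euc N → ℝ) (u : Euc N → ℝ) (g : Euc N → Euc N) : ℝ :=
  sInf {τ : ℝ | 0 < τ ∧
    (∫⁻ x, ENNReal.ofReal (Hfun p q a x (‖g x‖ / τ) + V x * Hfun p q a x (|u x| / τ))) ≤ 1}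

/-- Smooth compactly supported test functions. -/
def IsTestFun (φ : Euc N → ℝ) : Prop := ContDiff ℝ (⊤ : ℕ∞) φ ∧ HasCompactSupport φ

/-- The (classical) gradient of a function. -/
def gradf (φ : Euc N → ℝ) : Euc N → Euc N :=
  fun x => (EuclideanSpace.equiv (Fin N) ℝ).symm fun i => fderiv ℝ φ x (EuclideanSpace.single i 1)

/-- Membership in `W^{1,H}_V(ℝ^N)`. -/
def MemW1HV (p q a V : Euc N → ℝ) (u : Euc N → ℝ) (g : Euc N → Euc N) : Prop :=
  HasWeakGradOn Set.univ u g ∧ rhoV p q a V u g < ⊤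

/-- Membership in `X_V`, the closure of `C_c^∞(ℝ^N)` in `W^{1,H}_V(ℝ^N)`. -/
def MemXV (p q a V : Euc N → ℝ) (u : Euc N → ℝ) (g : Euc N → Euc N) : Prop :=
  MemW1HV p q a V u g ∧
    ∀ ε : ℝ, 0 < ε → ∃ φ : Euc N → ℝ, IsTestFun φ ∧
      vNorm p q a V (fun x => u x - φ x) (fun x => g x - gradf φ x) < ε

/-- Membership in `X_λ` (the space `X_{λV}`). -/
def MemXlam (p q a V : Euc N → ℝ) (lam : ℝ) (u : Euc N → ℝ) (g : Euc N → Euc N) : Prop :=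
  MemXV p q a (fun x => lam * V x) u g

/-- Strong convergence in `X_V`. -/
def StrongConv (p q a V : Euc N → ℝ) (un : ℕ → Euc N → ℝ) (gn : ℕ → Euc N → Euc N)
    (u : Euc N → ℝ) (g : Euc N → Euc N) : Prop :=
  Tendsto (fun n => vNorm p q a V (fun x => un n x - u x) (fun x => gn n x - g x)) atTop (𝓝 0)

/-- A bounded linear functional on `X_V` (realized on pairs of representatives). -/
def BddLinFunctional (p q a V : Euc N → ℝ)
    (F : (Euc N → ℝ) → (Euc N → Euc N) → ℝ) : Prop :=
  (∀ u₁ g₁ u₂ g₂, F (u₁ + u₂) (g₁ + g₂) = F u₁ g₁ + F u₂ g₂) ∧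
  (∀ (c : ℝ) (u : Euc N → ℝ) (g : Euc N → Euc N), F (c • u) (c • g) = c * F u g) ∧
  (∃ C : ℝ, ∀ u g, MemXV p q a V u g → |F u g| ≤ C * vNorm p q a V u g)

/-- Weak convergence in `X_V`. -/
def WeakConv (p q a V : Euc N → ℝ) (un : ℕ → Euc N → ℝ) (gn : ℕ → Euc N → Euc N)
    (u : Euc N → ℝ) (g : Euc N → Euc N) : Prop :=
  (∀ n, MemXV p q a V (un n) (gn n)) ∧ MemXV p q a V u g ∧
    ∀ F, BddLinFunctional p q a V F →
      Tendsto (fun n => F (un n) (gn n)) atTop (𝓝 (F u g))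

/-- Weak-* convergence of finite Radon measures (tested against `C₀(ℝ^N)`). -/
def WeakStarConv (μn : ℕ → Measure (Euc N)) (μ : Measure (Euc N)) : Prop :=
  ∀ f : Euc N → ℝ, Continuous f → Tendsto f (cocompact (Euc N)) (𝓝 0) →
    Tendsto (fun n => ∫ x, f x ∂(μn n)) atTop (𝓝 (∫ x, f x ∂μ))

/-- The measure with density `H(x,|∇u|) + V(x) H(x,|u|)`. -/
def densH (p q a V : Euc N → ℝ) (u : Euc N → ℝ) (g : Euc N → Euc N) : Measure (Euc N) :=
  volume.withDensity fun x => ENNReal.ofReal (Hfun p q a x ‖g x‖ + V x * Hfun p q a x |u x|)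

/-- The measure with density `ℬ(x,|u|)`. -/
def densB (c₁ c₂ a q r s : Euc N → ℝ) (u : Euc N → ℝ) : Measure (Euc N) :=
  volume.withDensity fun x => ENNReal.ofReal (Bfun c₁ c₂ a q r s x |u x|)

/-- Condition (C). -/
structure CondC (p q a c₁ c₂ r s : Euc N → ℝ) : Prop where
  c₁_meas : AEMeasurable c₁ (volume : Measure (Euc N))
  c₂_meas : AEMeasurable c₂ (volume : Measure (Euc N))
  c₁_pos : ∀ᵐ x ∂(volume : Measure (Euc N)), 0 < c₁ x
  c₁_bdd : ∃ M : ℝ, ∀ᵐ x ∂(volume : Measure (Euc N)), c₁ x ≤ M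
  c₂_nonneg : ∀ᵐ x ∂(volume : Measure (Euc N)), 0 ≤ c₂ x
  c₂_bdd : ∃ M : ℝ, ∀ᵐ x ∂(volume : Measure (Euc N)), c₂ x ≤ M
  r_cont : Continuous r
  s_cont : Continuous s
  r_lb : ∃ c : ℝ, 1 < c ∧ ∀ x, c ≤ r x
  r_ub : ∃ M : ℝ, ∀ x, r x ≤ M
  s_lb : ∃ c : ℝ, 1 < c ∧ ∀ x, c ≤ s x
  s_ub : ∃ M : ℝ, ∀ x, s x ≤ M
  q_ll_r : ∃ ε : ℝ, 0 < ε ∧ ∀ x, q x + ε ≤ r x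
  r_le_pstar : ∀ x, r x ≤ sconj p x
  balance : ∀ x, sconj q x - s x = sconj p x - r x
  crit_nonempty : {x : Euc N | r x = sconj p x ∧ s x = sconj q x}.Nonempty

/-- The best constant `S` of the embedding `X_V ↪ L^ℬ(ℝ^N)`. -/
def Sconst (p q a V c₁ c₂ r s : Euc N → ℝ) : ℝ :=
  sInf ((fun φ : (Euc N → ℝ) × (Euc N → Euc N) =>
      vNorm p q a V φ.1 φ.2 / luxNorm Set.univ (Bfun c₁ c₂ a q r s) φ.1) ''
    {φ : (Euc N → ℝ) × (Euc N → Euc N) |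
      MemXV p q a V φ.1 φ.2 ∧ ¬ φ.1 =ᵐ[(volume : Measure (Euc N))] fun _ => (0 : ℝ)})

/-- The double phase vector field `𝒜(x,ξ)`. -/
def Avec (p q a : Euc N → ℝ) (x : Euc N) (ξ : Euc N) : Euc N :=
  (‖ξ‖ ^ (p x - 2)) • ξ + (a x * ‖ξ‖ ^ (q x - 2)) • ξ

/-- The scalar term `A(x,t)`. -/
def Ascal (p q a : Euc N → ℝ) (x : Euc N) (t : ℝ) : ℝ :=
  |t| ^ (p x - 2) * t + a x * |t| ^ (q x - 2) * t

/-- The subcritical nonlinearity `f(x,t)`. -/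
def fsub (b₁ b₂ a q l₁ l₂ : Euc N → ℝ) (x : Euc N) (t : ℝ) : ℝ :=
  b₁ x * |t| ^ (l₁ x - 2) * t + b₂ x * a x ^ (l₂ x / q x) * |t| ^ (l₂ x - 2) * t

/-- The critical nonlinearity `B(x,t)`. -/
def Bnl (c₁ c₂ a q r s : Euc N → ℝ) (x : Euc N) (t : ℝ) : ℝ :=
  c₁ x * |t| ^ (r x - 2) * t + c₂ x * a x ^ (s x / q x) * |t| ^ (s x - 2) * t

/-- Condition (S). -/
structure CondS (p q a b₁ b₂ l₁ l₂ : Euc N → ℝ) : Prop where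
  l₁_cont : Continuous l₁
  l₂_cont : Continuous l₂
  l₁_lb : ∃ c : ℝ, 1 < c ∧ ∀ x, c ≤ l₁ x
  l₁_ub : ∃ M : ℝ, ∀ x, l₁ x ≤ M
  l₂_ub : ∃ M : ℝ, ∀ x, l₂ x ≤ M
  l₁_lt_l₂ : ∀ x, l₁ x < l₂ x
  l₁_ll_pstar : ∃ ε : ℝ, 0 < ε ∧ ∀ x, l₁ x + ε ≤ sconj p x
  l₂_ll_qstar : ∃ ε : ℝ, 0 < ε ∧ ∀ x, l₂ x + ε ≤ sconj q x
  b₁_meas : AEMeasurable b₁ (volume : Measure (Euc N))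
  b₂_meas : AEMeasurable b₂ (volume : Measure (Euc N))
  b₁_pos : ∀ᵐ x ∂(volume : Measure (Euc N)), 0 < b₁ x
  b₂_nonneg : ∀ᵐ x ∂(volume : Measure (Euc N)), 0 ≤ b₂ x
  b₁_int : (∫⁻ x, ENNReal.ofReal (|b₁ x| ^ (sconj p x / (sconj p x - l₁ x)))) < ⊤
  b₂_int : (∫⁻ x, ENNReal.ofReal (|b₂ x| ^ (sconj q x / (sconj q x - l₂ x)))) < ⊤

/-- Condition (E∞): the exponents have limits at infinity. -/
def CondEinf (p q r s : Euc N → ℝ) (pinf qinf rinf sinf : ℝ) : Prop :=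
  Tendsto p (cocompact (Euc N)) (𝓝 pinf) ∧ Tendsto q (cocompact (Euc N)) (𝓝 qinf) ∧
    Tendsto r (cocompact (Euc N)) (𝓝 rinf) ∧ Tendsto s (cocompact (Euc N)) (𝓝 sinf)

/-- The energy functional `J`. -/
def Jfun (p q a V b₁ b₂ l₁ l₂ c₁ c₂ r s : Euc N → ℝ) (lam θ : ℝ)
    (u : Euc N → ℝ) (g : Euc N → Euc N) : ℝ :=
  (∫ x, (‖g x‖ ^ p x / p x + a x * ‖g x‖ ^ q x / q x)) +
    (∫ x, lam * V x * (|u x| ^ p x / p x + a x * |u x| ^ q x / q x)) -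
    (∫ x, (b₁ x * |u x| ^ l₁ x / l₁ x + b₂ x * a x ^ (l₂ x / q x) * |u x| ^ l₂ x / l₂ x)) -
    θ * ∫ x, (c₁ x * |u x| ^ r x / r x + c₂ x * a x ^ (s x / q x) * |u x| ^ s x / s x)

/-- The Fréchet derivative of `J` at `(u,g)` applied to `(v,h)`. -/
def Jprime (p q a V b₁ b₂ l₁ l₂ c₁ c₂ r s : Euc N → ℝ) (lam θ : ℝ)
    (u : Euc N → ℝ) (g : Euc N → Euc N) (v : Euc N → ℝ) (h : Euc N → Euc N) : ℝ :=
  (∫ x, (inner ℝ (Avec p q a x (g x)) (h x) : ℝ)) +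
    (∫ x, lam * V x * Ascal p q a x (u x) * v x) -
    (∫ x, fsub b₁ b₂ a q l₁ l₂ x (u x) * v x) -
    θ * ∫ x, Bnl c₁ c₂ a q r s x (u x) * v x

/-- The dual norm of `J'(u)` in `(X_λ)^*`. -/
def JprimeDualNorm (p q a V b₁ b₂ l₁ l₂ c₁ c₂ r s : Euc N → ℝ) (lam θ : ℝ)
    (u : Euc N → ℝ) (g : Euc N → Euc N) : ℝ :=
  sSup {t : ℝ | ∃ v h, MemXlam p q a V lam v h ∧
    vNorm p q a (fun x => lam * V x) v h ≤ 1 ∧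
    t = |Jprime p q a V b₁ b₂ l₁ l₂ c₁ c₂ r s lam θ u g v h|}

/-- Condition (V₂). -/
structure CondV2 (V : Euc N → ℝ) : Prop where
  cont : Continuous V
  nonempty : (interior (V ⁻¹' {0})).Nonempty
  bounded : Bornology.IsBounded (interior (V ⁻¹' {0}))
  closure_eq : closure (interior (V ⁻¹' {0})) = V ⁻¹' {0}
  smooth : ∃ Φ : Euc N → ℝ, ContDiff ℝ (⊤ : ℕ∞) Φ ∧
    interior (V ⁻¹' {0}) = {x | Φ x < 0} ∧
    frontier (interior (V ⁻¹' {0})) = {x | Φ x = 0} ∧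
    ∀ x, Φ x = 0 → fderiv ℝ Φ x ≠ 0

/-- Weak solution of the double phase problem on `ℝ^N`. -/
def IsWeakSolution (p q a V b₁ b₂ l₁ l₂ c₁ c₂ r s : Euc N → ℝ) (lam θ : ℝ)
    (u : Euc N → ℝ) (g : Euc N → Euc N) : Prop :=
  MemXlam p q a V lam u g ∧
    ∀ v h, MemXlam p q a V lam v h →
      (∫ x, (inner ℝ (Avec p q a x (g x)) (h x) : ℝ)) +
          (∫ x, lam * V x * Ascal p q a x (u x) * v x)
        = (∫ x, fsub b₁ b₂ a q l₁ l₂ x (u x) * v x) +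
            θ * ∫ x, Bnl c₁ c₂ a q r s x (u x) * v x

/-- A bounded Lipschitz(-graph) domain. -/
def IsLipschitzDomain (Ω : Set (Euc N)) : Prop :=
  IsOpen Ω ∧ Bornology.IsBounded Ω ∧
    ∀ x ∈ frontier Ω, ∃ ε : ℝ, 0 < ε ∧ ∃ v : Euc N, ‖v‖ = 1 ∧
      ∃ (K : ℝ≥0) (γ : Euc N → ℝ), LipschitzWith K γ ∧
        ∀ y ∈ Metric.ball x ε,
          (y ∈ Ω ↔ γ (y - (inner ℝ y v : ℝ) • v) < (inner ℝ y v : ℝ))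

lemma luxNorm_nonneg (Ω : Set (Euc N)) (Φ : Euc N → ℝ → ℝ) (u : Euc N → ℝ) :
    0 ≤ luxNorm Ω Φ u :=
  Real.sInf_nonneg fun _ h => h.1.le

lemma halfBound (Ω : Set (Euc N)) (hΩ : MeasurableSet Ω)
    (w₁ w₂ α β : Euc N → ℝ) (u w e d : Euc N → ℝ) (D : ℝ) (hD0 : 0 ≤ D)
    (hw : ∀ᵐ x ∂volume.restrict Ω, 0 ≤ w x)
    (he : ∀ x ∈ Ω, 0 < e x) (hd : ∀ x ∈ Ω, 0 < d x) (hDub : ∀ x ∈ Ω, d x ≤ D)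
    (hcmp : ∀ᵐ x ∂volume.restrict Ω, ∀ t : ℝ, 0 ≤ t → w x * t ^ e x ≤ Psi w₁ w₂ α β x t)
    (hS : ∀ σ : ℝ, psiNorm Ω w₁ w₂ α β u < σ →
      (∫⁻ x in Ω, ENNReal.ofReal (Psi w₁ w₂ α β x (|u x| / σ))) ≤ 1) :
    luxNorm Ω (fun x t => t ^ (e x / d x)) (fun x => w x ^ (d x / e x) * |u x| ^ d x)
      ≤ 1 + psiNorm Ω w₁ w₂ α β u ^ D := by
  set k := psiNorm Ω w₁ w₂ α β u with hk
  have hk0 : 0 ≤ k := luxNorm_nonneg _ _ _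
  refine le_of_forall_pos_le_add fun ε hε => ?_
  -- choose σ > k with σ ^ D ≤ k ^ D + ε
  have hcont : ContinuousAt (fun t : ℝ => t ^ D) k :=
    Real.continuousAt_rpow_const k D (Or.inr hD0)
  have hev : ∀ᶠ t in 𝓝 k, t ^ D < k ^ D + ε := by
    have : Set.Iio (k ^ D + ε) ∈ 𝓝 (k ^ D) := Iio_mem_nhds (by linarith)
    exact hcont this
  have hev1 : ∀ᶠ t in 𝓝[>] k, t ^ D < k ^ D + ε :=
    eventually_nhdsWithin_of_eventually_nhds hev
  obtain ⟨σ, hσD, hσk⟩ := (hev1.and eventually_mem_nhdsWithin).exists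
  have hσk : k < σ := hσk
  have hσ0 : 0 < σ := lt_of_le_of_lt hk0 hσk
  have hmod := hS σ hσk
  set τ₀ : ℝ := 1 + σ ^ D with hτ₀
  have hσD0 : 0 ≤ σ ^ D := Real.rpow_nonneg hσ0.le D
  have hτ₀1 : 1 ≤ τ₀ := by simp [hτ₀]; linarith
  have hτ₀0 : 0 < τ₀ := lt_of_lt_of_le one_pos hτ₀1
  have hmem : τ₀ ∈ {τ : ℝ | 0 < τ ∧
      (∫⁻ x in Ω, ENNReal.ofReal ((|w x ^ (d x / e x) * |u x| ^ d x| / τ)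
        ^ (e x / d x))) ≤ 1} := by
    refine ⟨hτ₀0, le_trans (lintegral_mono_ae ?_) hmod⟩
    filter_upwards [hw, hcmp, ae_restrict_mem hΩ] with x hwx hcx hxΩ
    refine ENNReal.ofReal_le_ofReal ?_
    have hex : 0 < e x := he x hxΩ
    have hdx : 0 < d x := hd x hxΩ
    have h1 : (0:ℝ) ≤ |u x| := abs_nonneg _
    have hfx : (0:ℝ) ≤ w x ^ (d x / e x) * |u x| ^ d x :=
      mul_nonneg (Real.rpow_nonneg hwx _) (Real.rpow_nonneg h1 _)
    rw [abs_of_nonneg hfx]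
    have hed0 : 0 ≤ e x / d x := le_of_lt (div_pos hex hdx)
    have key1 : (w x ^ (d x / e x) * |u x| ^ d x) ^ (e x / d x) = w x * |u x| ^ e x := by
      rw [Real.mul_rpow (Real.rpow_nonneg hwx _) (Real.rpow_nonneg h1 _),
        ← Real.rpow_mul hwx, ← Real.rpow_mul h1]
      have e1 : d x / e x * (e x / d x) = 1 := by field_simp
      have e2 : d x * (e x / d x) = e x := by field_simp
      rw [e1, e2, Real.rpow_one]
    have hσd : σ ^ d x ≤ τ₀ := by
      rcases le_total σ 1 with h | h
      · have := Real.rpow_le_one hσ0.le h hdx.le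
        simp only [hτ₀]; linarith
      · have := Real.rpow_le_rpow_of_exponent_le h (hDub x hxΩ)
        simp only [hτ₀]; linarith
    have key2 : σ ^ e x ≤ τ₀ ^ (e x / d x) := by
      calc σ ^ e x = (σ ^ d x) ^ (e x / d x) := by
            rw [← Real.rpow_mul hσ0.le]
            congr 1
            field_simp
        _ ≤ τ₀ ^ (e x / d x) :=
            Real.rpow_le_rpow (Real.rpow_nonneg hσ0.le _) hσd hed0
    have hσe : 0 < σ ^ e x := Real.rpow_pos_of_pos hσ0 _
    calc (w x ^ (d x / e x) * |u x| ^ d x / τ₀) ^ (e x / d x)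
        = (w x ^ (d x / e x) * |u x| ^ d x) ^ (e x / d x) / τ₀ ^ (e x / d x) :=
          Real.div_rpow hfx hτ₀0.le _
      _ = w x * |u x| ^ e x / τ₀ ^ (e x / d x) := by rw [key1]
      _ ≤ w x * |u x| ^ e x / σ ^ e x := by
          gcongr <;> exact mul_nonneg hwx (Real.rpow_nonneg h1 _)
      _ = w x * (|u x| / σ) ^ e x := by
          rw [Real.div_rpow h1 hσ0.le, mul_div_assoc]
      _ ≤ Psi w₁ w₂ α β x (|u x| / σ) := hcx _ (div_nonneg h1 hσ0.le)
  have hbdd : BddBelow {τ : ℝ | 0 < τ ∧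
      (∫⁻ x in Ω, ENNReal.ofReal ((|w x ^ (d x / e x) * |u x| ^ d x| / τ)
        ^ (e x / d x))) ≤ 1} := ⟨0, fun τ hτ => hτ.1.le⟩
  have := csInf_le hbdd hmem
  calc luxNorm Ω (fun x t => t ^ (e x / d x)) (fun x => w x ^ (d x / e x) * |u x| ^ d x)
      ≤ τ₀ := this
    _ ≤ 1 + k ^ D + ε := by simp only [hτ₀]; linarith


/-- variable exponent norm bounds via the `L^Ψ` norm. -/
theorem statement2 {N : ℕ} (Ω : Set (Euc N)) (w₁ w₂ α β : Euc N → ℝ)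
    (hset : PsiSetting Ω w₁ w₂ α β) (r s : Euc N → ℝ)
    (hr_cont : ContinuousOn r (closure Ω)) (hs_cont : ContinuousOn s (closure Ω))
    (hr_pos : ∀ x ∈ closure Ω, 0 < r x) (hs_pos : ∀ x ∈ closure Ω, 0 < s x)
    (hrα : ∃ ε : ℝ, 0 < ε ∧ ∀ x ∈ closure Ω, r x + ε ≤ α x)
    (hsβ : ∃ ε : ℝ, 0 < ε ∧ ∀ x ∈ closure Ω, s x + ε ≤ β x)
    (u : Euc N → ℝ) (hu_meas : AEMeasurable u (volume.restrict Ω))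
    (hu_mem : psiMod Ω w₁ w₂ α β u < ⊤) :
    luxNorm Ω (fun x t => t ^ (α x / r x)) (fun x => w₁ x ^ (r x / α x) * |u x| ^ r x)
        ≤ 1 + psiNorm Ω w₁ w₂ α β u ^ sSup (r '' closure Ω) ∧
    luxNorm Ω (fun x t => t ^ (β x / s x)) (fun x => w₂ x ^ (s x / β x) * |u x| ^ s x)
        ≤ 1 + psiNorm Ω w₁ w₂ α β u ^ sSup (s '' closure Ω) := by
  have hΩm : MeasurableSet Ω := hset.isOpen.measurableSet
  obtain ⟨cα, hcα1, hcα⟩ := hset.α_lb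
  obtain ⟨cβ, hcβ1, hcβ⟩ := hset.β_lb
  obtain ⟨Mα, hMα⟩ := hset.α_ub
  obtain ⟨Mβ, hMβ⟩ := hset.β_ub
  -- the modular is nonincreasing in the divisor
  have hmono : ∀ τ σ : ℝ, 0 < τ → τ ≤ σ →
      (∫⁻ x in Ω, ENNReal.ofReal (Psi w₁ w₂ α β x (|u x| / τ))) ≤ 1 →
      (∫⁻ x in Ω, ENNReal.ofReal (Psi w₁ w₂ α β x (|u x| / σ))) ≤ 1 := by
    intro τ σ hτ0 hτσ hint
    refine le_trans (lintegral_mono_ae ?_) hint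
    filter_upwards [hset.w₁_pos, hset.w₂_nonneg, ae_restrict_mem hΩm] with x hw1 hw2 hxΩ
    refine ENNReal.ofReal_le_ofReal ?_
    have hx' := subset_closure hxΩ
    have h1 : (0:ℝ) ≤ |u x| := abs_nonneg _
    have ht : |u x| / σ ≤ |u x| / τ := by gcongr
    have ht0 : (0:ℝ) ≤ |u x| / σ := div_nonneg h1 (by linarith)
    have hα0 : (0:ℝ) ≤ α x := by linarith [hcα x hx']
    have hβ0 : (0:ℝ) ≤ β x := by linarith [hcβ x hx']
    simp only [Psi]
    gcongr <;> first
      | exact hw1.le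
      | exact Real.rpow_le_rpow ht0 ht hα0
      | exact Real.rpow_le_rpow ht0 ht hβ0
  -- the Luxemburg-norm set is nonempty
  have hSne : ∃ τb : ℝ, 0 < τb ∧
      (∫⁻ x in Ω, ENNReal.ofReal (Psi w₁ w₂ α β x (|u x| / τb))) ≤ 1 := by
    set m : ℝ := min cα cβ with hm
    have hm1 : 1 < m := lt_min hcα1 hcβ1
    set R : ℝ≥0∞ := psiMod Ω w₁ w₂ α β u with hR
    set τb : ℝ := max 1 ((R.toReal + 1) ^ (1 / m)) with hτb
    have hτb1 : (1:ℝ) ≤ τb := le_max_left _ _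
    have hτb0 : (0:ℝ) < τb := lt_of_lt_of_le one_pos hτb1
    refine ⟨τb, hτb0, ?_⟩
    have hpt : ∀ᵐ x ∂volume.restrict Ω,
        Psi w₁ w₂ α β x (|u x| / τb) ≤ τb ^ (-m) * Psi w₁ w₂ α β x |u x| := by
      filter_upwards [hset.w₁_pos, hset.w₂_nonneg, ae_restrict_mem hΩm] with x hw1 hw2 hxΩ
      have hx' := subset_closure hxΩ
      have h1 : (0:ℝ) ≤ |u x| := abs_nonneg _
      have hα := hcα x hx'
      have hβ := hcβ x hx'
      have e1 : (|u x| / τb) ^ α x = |u x| ^ α x * τb ^ (-(α x)) := by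
        rw [Real.div_rpow h1 hτb0.le, Real.rpow_neg hτb0.le, div_eq_mul_inv]
      have e2 : (|u x| / τb) ^ β x = |u x| ^ β x * τb ^ (-(β x)) := by
        rw [Real.div_rpow h1 hτb0.le, Real.rpow_neg hτb0.le, div_eq_mul_inv]
      have le1 : τb ^ (-(α x)) ≤ τb ^ (-m) :=
        Real.rpow_le_rpow_of_exponent_le hτb1 (by have := min_le_left cα cβ; linarith)
      have le2 : τb ^ (-(β x)) ≤ τb ^ (-m) :=
        Real.rpow_le_rpow_of_exponent_le hτb1 (by have := min_le_right cα cβ; linarith)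
      calc Psi w₁ w₂ α β x (|u x| / τb)
          = w₁ x * (|u x| ^ α x * τb ^ (-(α x))) + w₂ x * (|u x| ^ β x * τb ^ (-(β x))) := by
            simp only [Psi, e1, e2]
        _ ≤ w₁ x * (|u x| ^ α x * τb ^ (-m)) + w₂ x * (|u x| ^ β x * τb ^ (-m)) := by
            gcongr <;> first
              | exact hw1.le
              | exact Real.rpow_nonneg h1 _
              | exact le1
              | exact le2
        _ = τb ^ (-m) * Psi w₁ w₂ α β x |u x| := by simp only [Psi]; ring
    have step : (∫⁻ x in Ω, ENNReal.ofReal (Psi w₁ w₂ α β x (|u x| / τb)))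
        ≤ ENNReal.ofReal (τb ^ (-m)) * R := by
      calc (∫⁻ x in Ω, ENNReal.ofReal (Psi w₁ w₂ α β x (|u x| / τb)))
          ≤ ∫⁻ x in Ω, ENNReal.ofReal (τb ^ (-m) * Psi w₁ w₂ α β x |u x|) :=
            lintegral_mono_ae (hpt.mono fun x h => ENNReal.ofReal_le_ofReal h)
        _ = ∫⁻ x in Ω, ENNReal.ofReal (τb ^ (-m)) * ENNReal.ofReal (Psi w₁ w₂ α β x |u x|) := by
            refine lintegral_congr fun x => ?_
            rw [ENNReal.ofReal_mul (Real.rpow_nonneg hτb0.le _)]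
        _ = ENNReal.ofReal (τb ^ (-m)) * R :=
            lintegral_const_mul' _ _ ENNReal.ofReal_ne_top
    refine le_trans step ?_
    have h0 : (0:ℝ) ≤ R.toReal + 1 := by positivity
    have hτbm : R.toReal + 1 ≤ τb ^ m := by
      have e3 : ((R.toReal + 1) ^ (1 / m)) ^ m = R.toReal + 1 := by
        rw [← Real.rpow_mul h0, one_div_mul_cancel (by linarith : m ≠ (0:ℝ)), Real.rpow_one]
      calc R.toReal + 1 = ((R.toReal + 1) ^ (1 / m)) ^ m := e3.symm
        _ ≤ τb ^ m :=
          Real.rpow_le_rpow (Real.rpow_nonneg h0 _) (le_max_right _ _) (by linarith)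
    have hinv : τb ^ (-m) ≤ (R.toReal + 1)⁻¹ := by
      rw [Real.rpow_neg hτb0.le]
      exact inv_anti₀ (by positivity) hτbm
    calc ENNReal.ofReal (τb ^ (-m)) * R
        = ENNReal.ofReal (τb ^ (-m)) * ENNReal.ofReal R.toReal := by
          rw [ENNReal.ofReal_toReal hu_mem.ne]
      _ = ENNReal.ofReal (τb ^ (-m) * R.toReal) :=
          (ENNReal.ofReal_mul (Real.rpow_nonneg hτb0.le _)).symm
      _ ≤ ENNReal.ofReal 1 := by
          refine ENNReal.ofReal_le_ofReal ?_
          have ht0 : (0:ℝ) ≤ R.toReal := ENNReal.toReal_nonneg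
          have h2 := mul_le_mul_of_nonneg_right hinv ht0
          have h3 : (R.toReal + 1)⁻¹ * R.toReal ≤ 1 := by
            rw [inv_mul_eq_div, div_le_one (by linarith)]; linarith
          linarith
      _ = 1 := ENNReal.ofReal_one
  -- every σ above the norm is admissible
  have hS : ∀ σ : ℝ, psiNorm Ω w₁ w₂ α β u < σ →
      (∫⁻ x in Ω, ENNReal.ofReal (Psi w₁ w₂ α β x (|u x| / σ))) ≤ 1 := by
    intro σ hσ
    obtain ⟨τb, hτb0, hτbint⟩ := hSne
    have hne : Set.Nonempty {τ : ℝ | 0 < τ ∧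
        (∫⁻ x in Ω, ENNReal.ofReal (Psi w₁ w₂ α β x (|u x| / τ))) ≤ 1} := ⟨τb, hτb0, hτbint⟩
    have hσ' : sInf {τ : ℝ | 0 < τ ∧
        (∫⁻ x in Ω, ENNReal.ofReal (Psi w₁ w₂ α β x (|u x| / τ))) ≤ 1} < σ := hσ
    obtain ⟨τ, hτmem, hτσ⟩ := exists_lt_of_csInf_lt hne hσ'
    exact hmono τ σ hτmem.1 hτσ.le hτmem.2
  -- the suprema of r and s are nonnegative upper bounds
  have hrub : ∀ x ∈ closure Ω, r x ≤ Mα := by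
    intro x hx
    obtain ⟨ε, hε, hrε⟩ := hrα
    have := hrε x hx
    have := hMα x hx
    linarith
  have hsub' : ∀ x ∈ closure Ω, s x ≤ Mβ := by
    intro x hx
    obtain ⟨ε, hε, hsε⟩ := hsβ
    have := hsε x hx
    have := hMβ x hx
    linarith
  have hbddr : BddAbove (r '' closure Ω) := ⟨Mα, by rintro y ⟨x, hx, rfl⟩; exact hrub x hx⟩
  have hbdds : BddAbove (s '' closure Ω) := ⟨Mβ, by rintro y ⟨x, hx, rfl⟩; exact hsub' x hx⟩
  have hDubr : ∀ x ∈ closure Ω, r x ≤ sSup (r '' closure Ω) :=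
    fun x hx => le_csSup hbddr ⟨x, hx, rfl⟩
  have hDubs : ∀ x ∈ closure Ω, s x ≤ sSup (s '' closure Ω) :=
    fun x hx => le_csSup hbdds ⟨x, hx, rfl⟩
  have hD0r : 0 ≤ sSup (r '' closure Ω) := by
    rcases (closure Ω).eq_empty_or_nonempty with hemp | ⟨x₀, hx₀⟩
    · simp [hemp, Real.sSup_empty]
    · exact le_trans (hr_pos x₀ hx₀).le (hDubr x₀ hx₀)
  have hD0s : 0 ≤ sSup (s '' closure Ω) := by
    rcases (closure Ω).eq_empty_or_nonempty with hemp | ⟨x₀, hx₀⟩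
    · simp [hemp, Real.sSup_empty]
    · exact le_trans (hs_pos x₀ hx₀).le (hDubs x₀ hx₀)
  constructor
  · refine halfBound Ω hΩm w₁ w₂ α β u w₁ α r _ hD0r
      (hset.w₁_pos.mono fun x h => h.le)
      (fun x hx => by linarith [hcα x (subset_closure hx)])
      (fun x hx => hr_pos x (subset_closure hx))
      (fun x hx => hDubr x (subset_closure hx)) ?_ hS
    filter_upwards [hset.w₂_nonneg] with x hw2
    intro t ht
    simp only [Psi]
    have : 0 ≤ w₂ x * t ^ β x := mul_nonneg hw2 (Real.rpow_nonneg ht _)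
    linarith
  · refine halfBound Ω hΩm w₁ w₂ α β u w₂ β s _ hD0s
      hset.w₂_nonneg
      (fun x hx => by linarith [hcβ x (subset_closure hx)])
      (fun x hx => hs_pos x (subset_closure hx))
      (fun x hx => hDubs x (subset_closure hx)) ?_ hS
    filter_upwards [hset.w₁_pos] with x hw1
    intro t ht
    simp only [Psi]
    have : 0 ≤ w₁ x * t ^ α x := mul_nonneg hw1.le (Real.rpow_nonneg ht _)
    linarith


end DoublePhase
end
end

section
/- (Brezis–Lieb lemma in Musielak–Orlicz spaces.) Let {f_n}_{n∈ℕ} be a sequence in L^Ψ(Ω) with sup_n ‖f_n‖_Ψ < ∞, and suppose f_n(x) → f(x) for almost every x ∈ Ω. Then f ∈ L^Ψ(Ω) and lim_{n→∞} ∫_Ω | Ψ(x,|f_n|) − Ψ(x,|f_n − f|) − Ψ(x,|f|) | dx = 0. -/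
open MeasureTheory Filter Topology Set NNReal ENNReal

noncomputable section

namespace DoublePhase

variable {N : ℕ}

private lemma BL_convex {s t p P ε : ℝ} (hs : 0 ≤ s) (ht : 0 ≤ t) (hp : 1 ≤ p)
    (hpP : p ≤ P) (hε : 0 < ε) :
    (s + t) ^ p ≤ (1 + ε) ^ P * s ^ p + (1 + 1 / ε) ^ P * t ^ p := by
  have h1ε : (0:ℝ) < 1 + ε := by linarith
  have hb0 : (1:ℝ) ≤ 1 + 1 / ε := by
    have : 0 < 1 / ε := by positivity
    linarith
  have ha : (0:ℝ) ≤ 1 / (1 + ε) := by positivity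
  have hb : (0:ℝ) ≤ ε / (1 + ε) := by positivity
  have hab : 1 / (1 + ε) + ε / (1 + ε) = 1 := by field_simp
  have hx : s * (1 + ε) ∈ Set.Ici (0:ℝ) := by
    simp only [Set.mem_Ici]; positivity
  have hy : t * (1 + 1 / ε) ∈ Set.Ici (0:ℝ) := by
    have : (0:ℝ) ≤ 1 + 1/ε := by linarith
    simp only [Set.mem_Ici]; positivity
  have key := (convexOn_rpow hp).2 hx hy ha hb hab
  have heq : (1 / (1 + ε)) • (s * (1 + ε)) + (ε / (1 + ε)) • (t * (1 + 1 / ε)) = s + t := by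
    simp only [smul_eq_mul]
    field_simp
    ring
  rw [heq] at key
  simp only [smul_eq_mul] at key
  have h1 : (1 / (1 + ε)) * (s * (1 + ε)) ^ p ≤ (1 + ε) ^ P * s ^ p := by
    rw [Real.mul_rpow hs h1ε.le]
    have h2 : (1 + ε) ^ p ≤ (1 + ε) ^ P :=
      Real.rpow_le_rpow_of_exponent_le (by linarith) hpP
    have h3 : 1 / (1 + ε) ≤ 1 := by
      rw [div_le_one h1ε]; linarith
    have hsp : (0:ℝ) ≤ s ^ p := Real.rpow_nonneg hs _
    calc (1 / (1 + ε)) * (s ^ p * (1 + ε) ^ p) ≤ 1 * (s ^ p * (1 + ε) ^ p) := by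
          apply mul_le_mul_of_nonneg_right h3; positivity
      _ = s ^ p * (1 + ε) ^ p := by ring
      _ ≤ s ^ p * (1 + ε) ^ P := by
          apply mul_le_mul_of_nonneg_left h2 hsp
      _ = (1 + ε) ^ P * s ^ p := by ring
  have h1' : (ε / (1 + ε)) * (t * (1 + 1 / ε)) ^ p ≤ (1 + 1 / ε) ^ P * t ^ p := by
    rw [Real.mul_rpow ht (by linarith : (0:ℝ) ≤ 1 + 1/ε)]
    have h2 : (1 + 1 / ε) ^ p ≤ (1 + 1 / ε) ^ P :=
      Real.rpow_le_rpow_of_exponent_le hb0 hpP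
    have h3 : ε / (1 + ε) ≤ 1 := by
      rw [div_le_one h1ε]; linarith
    have htp : (0:ℝ) ≤ t ^ p := Real.rpow_nonneg ht _
    calc (ε / (1 + ε)) * (t ^ p * (1 + 1 / ε) ^ p) ≤ 1 * (t ^ p * (1 + 1 / ε) ^ p) := by
          apply mul_le_mul_of_nonneg_right h3; positivity
      _ = t ^ p * (1 + 1 / ε) ^ p := by ring
      _ ≤ t ^ p * (1 + 1 / ε) ^ P := by
          apply mul_le_mul_of_nonneg_left h2 htp
      _ = (1 + 1 / ε) ^ P * t ^ p := by ring
  calc (s + t) ^ p ≤ (1 / (1 + ε)) * (s * (1 + ε)) ^ p + (ε / (1 + ε)) * (t * (1 + 1 / ε)) ^ p :=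
        key
    _ ≤ (1 + ε) ^ P * s ^ p + (1 + 1 / ε) ^ P * t ^ p := add_le_add h1 h1'

private lemma BL_abs_diff {u v p P ε : ℝ} (hp : 1 ≤ p) (hpP : p ≤ P) (hε : 0 < ε) :
    |(|u + v|) ^ p - (|u|) ^ p| ≤ ((1 + ε) ^ (2 * P) - 1) * |u| ^ p
      + ((1 + ε) ^ P + 1) * (1 + 1 / ε) ^ P * |v| ^ p := by
  have hp0 : (0:ℝ) ≤ p := by linarith
  have h1ε : (1:ℝ) ≤ 1 + ε := by linarith
  have hPpos : (0:ℝ) < P := by linarith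
  set E : ℝ := (1 + ε) ^ P with hE
  set K : ℝ := (1 + 1 / ε) ^ P with hK
  have hE1 : 1 ≤ E := Real.one_le_rpow h1ε hPpos.le
  have hK0 : 0 ≤ K := Real.rpow_nonneg (by positivity) _
  have hEE : (1 + ε) ^ (2 * P) = E * E := by
    rw [hE, ← Real.rpow_add (by linarith : (0:ℝ) < 1 + ε)]
    ring_nf
  set A := |u + v| with hA
  set a := |u| with ha
  set b := |v| with hb
  have hA0 : 0 ≤ A := abs_nonneg _
  have ha0 : 0 ≤ a := abs_nonneg _
  have hb0 : 0 ≤ b := abs_nonneg _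
  have hAab : A ≤ a + b := abs_add_le u v
  have haAb : a ≤ A + b := by
    have h := abs_add_le (u + v) (-v)
    simp only [add_neg_cancel_right, abs_neg] at h
    exact h
  have hApb : A ^ p ≤ E * a ^ p + K * b ^ p := by
    calc A ^ p ≤ (a + b) ^ p := Real.rpow_le_rpow hA0 hAab hp0
      _ ≤ E * a ^ p + K * b ^ p := BL_convex ha0 hb0 hp hpP hε
  have hapb : a ^ p ≤ E * A ^ p + K * b ^ p := by
    calc a ^ p ≤ (A + b) ^ p := Real.rpow_le_rpow ha0 haAb hp0
      _ ≤ E * A ^ p + K * b ^ p := BL_convex hA0 hb0 hp hpP hε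
  have hap0 : (0:ℝ) ≤ a ^ p := Real.rpow_nonneg ha0 _
  have hbp0 : (0:ℝ) ≤ b ^ p := Real.rpow_nonneg hb0 _
  have hAp0 : (0:ℝ) ≤ A ^ p := Real.rpow_nonneg hA0 _
  rw [hEE, abs_le]
  constructor
  · nlinarith
  · nlinarith


private lemma BL_psi_diff {N : ℕ} {w₁ w₂ α β : Euc N → ℝ}
    {x : Euc N} {u v P ε : ℝ}
    (hw₁ : 0 ≤ w₁ x) (hw₂ : 0 ≤ w₂ x)
    (hα : 1 ≤ α x) (hαP : α x ≤ P) (hβ : 1 ≤ β x) (hβP : β x ≤ P) (hε : 0 < ε) :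
    |Psi w₁ w₂ α β x (|u + v|) - Psi w₁ w₂ α β x (|u|)| ≤
      ((1 + ε) ^ (2 * P) - 1) * Psi w₁ w₂ α β x |u|
        + ((1 + ε) ^ P + 1) * (1 + 1 / ε) ^ P * Psi w₁ w₂ α β x |v| := by
  have h1 := BL_abs_diff (u := u) (v := v) hα hαP hε
  have h2 := BL_abs_diff (u := u) (v := v) hβ hβP hε
  simp only [Psi]
  have e1 : w₁ x * |u + v| ^ α x + w₂ x * |u + v| ^ β x -
      (w₁ x * |u| ^ α x + w₂ x * |u| ^ β x)
      = w₁ x * ((|u + v|) ^ α x - (|u|) ^ α x) + w₂ x * ((|u + v|) ^ β x - (|u|) ^ β x) := by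
    ring
  rw [e1]
  have h3 : |w₁ x * ((|u + v|) ^ α x - (|u|) ^ α x) + w₂ x * ((|u + v|) ^ β x - (|u|) ^ β x)|
      ≤ w₁ x * |(|u + v|) ^ α x - (|u|) ^ α x| + w₂ x * |(|u + v|) ^ β x - (|u|) ^ β x| := by
    refine (abs_add_le _ _).trans ?_
    rw [abs_mul, abs_mul, abs_of_nonneg hw₁, abs_of_nonneg hw₂]
  refine h3.trans ?_
  have b1 := mul_le_mul_of_nonneg_left h1 hw₁
  have b2 := mul_le_mul_of_nonneg_left h2 hw₂
  calc w₁ x * |(|u + v|) ^ α x - (|u|) ^ α x| + w₂ x * |(|u + v|) ^ β x - (|u|) ^ β x|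
      ≤ w₁ x * (((1 + ε) ^ (2 * P) - 1) * (|u|) ^ α x
            + ((1 + ε) ^ P + 1) * (1 + 1 / ε) ^ P * (|v|) ^ α x)
        + w₂ x * (((1 + ε) ^ (2 * P) - 1) * (|u|) ^ β x
            + ((1 + ε) ^ P + 1) * (1 + 1 / ε) ^ P * (|v|) ^ β x) := add_le_add b1 b2
    _ = ((1 + ε) ^ (2 * P) - 1) * (w₁ x * (|u|) ^ α x + w₂ x * (|u|) ^ β x)
        + ((1 + ε) ^ P + 1) * (1 + 1 / ε) ^ P * (w₁ x * (|v|) ^ α x + w₂ x * (|v|) ^ β x) := by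
      ring

private lemma BL_rpow_scale_up {t c p P : ℝ} (ht : 0 ≤ t) (hc : 0 < c) (hp : 1 ≤ p)
    (hpP : p ≤ P) : t ^ p ≤ (max c 1) ^ P * (t / c) ^ p := by
  have htc : 0 ≤ t / c := by positivity
  have hm1 : (1:ℝ) ≤ max c 1 := le_max_right _ _
  have h1 : t ≤ (max c 1) * (t / c) := by
    have he : t = c * (t / c) := by field_simp
    nth_rewrite 1 [he]
    exact mul_le_mul_of_nonneg_right (le_max_left c 1) htc
  calc t ^ p ≤ ((max c 1) * (t / c)) ^ p := Real.rpow_le_rpow ht h1 (by linarith)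
    _ = (max c 1) ^ p * (t / c) ^ p := Real.mul_rpow (by positivity) htc
    _ ≤ (max c 1) ^ P * (t / c) ^ p :=
        mul_le_mul_of_nonneg_right (Real.rpow_le_rpow_of_exponent_le hm1 hpP)
          (Real.rpow_nonneg htc _)

private lemma BL_psi_scale_up {N : ℕ} {w₁ w₂ α β : Euc N → ℝ}
    {x : Euc N} {t c P : ℝ}
    (hw₁ : 0 ≤ w₁ x) (hw₂ : 0 ≤ w₂ x)
    (hα : 1 ≤ α x) (hαP : α x ≤ P) (hβ : 1 ≤ β x) (hβP : β x ≤ P)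
    (ht : 0 ≤ t) (hc : 0 < c) :
    Psi w₁ w₂ α β x t ≤ (max c 1) ^ P * Psi w₁ w₂ α β x (t / c) := by
  simp only [Psi]
  have b1 := mul_le_mul_of_nonneg_left (BL_rpow_scale_up ht hc hα hαP) hw₁
  have b2 := mul_le_mul_of_nonneg_left (BL_rpow_scale_up ht hc hβ hβP) hw₂
  calc w₁ x * t ^ α x + w₂ x * t ^ β x
      ≤ w₁ x * ((max c 1) ^ P * (t / c) ^ α x) + w₂ x * ((max c 1) ^ P * (t / c) ^ β x) :=
        add_le_add b1 b2
    _ = (max c 1) ^ P * (w₁ x * (t / c) ^ α x + w₂ x * (t / c) ^ β x) := by ring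

private lemma BL_rpow_scale_down {t τ p : ℝ} (ht : 0 ≤ t) (hτ : 1 ≤ τ) (hp : 1 ≤ p) :
    (t / τ) ^ p ≤ (1 / τ) * t ^ p := by
  have hτ0 : (0:ℝ) < τ := by linarith
  have h1 : t / τ = t * (1 / τ) := by ring
  have h2 : (0:ℝ) < 1 / τ := by positivity
  have h3 : 1 / τ ≤ 1 := by rw [div_le_one hτ0]; exact hτ
  calc (t / τ) ^ p = t ^ p * (1 / τ) ^ p := by
        rw [h1, Real.mul_rpow ht h2.le]
    _ ≤ t ^ p * (1 / τ) ^ (1:ℝ) := by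
        apply mul_le_mul_of_nonneg_left _ (Real.rpow_nonneg ht _)
        exact Real.rpow_le_rpow_of_exponent_ge h2 h3 hp
    _ = (1 / τ) * t ^ p := by rw [Real.rpow_one]; ring

private lemma BL_psi_scale_down {N : ℕ} {w₁ w₂ α β : Euc N → ℝ}
    {x : Euc N} {t τ : ℝ}
    (hw₁ : 0 ≤ w₁ x) (hw₂ : 0 ≤ w₂ x) (hα : 1 ≤ α x) (hβ : 1 ≤ β x)
    (ht : 0 ≤ t) (hτ : 1 ≤ τ) :
    Psi w₁ w₂ α β x (t / τ) ≤ (1 / τ) * Psi w₁ w₂ α β x t := by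
  simp only [Psi]
  have b1 := mul_le_mul_of_nonneg_left (BL_rpow_scale_down ht hτ hα) hw₁
  have b2 := mul_le_mul_of_nonneg_left (BL_rpow_scale_down ht hτ hβ) hw₂
  calc w₁ x * (t / τ) ^ α x + w₂ x * (t / τ) ^ β x
      ≤ w₁ x * ((1 / τ) * t ^ α x) + w₂ x * ((1 / τ) * t ^ β x) := add_le_add b1 b2
    _ = (1 / τ) * (w₁ x * t ^ α x + w₂ x * t ^ β x) := by ring

private lemma BL_psi_nonneg {N : ℕ} {w₁ w₂ α β : Euc N → ℝ}
    {x : Euc N} {t : ℝ}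
    (hw₁ : 0 ≤ w₁ x) (hw₂ : 0 ≤ w₂ x) (ht : 0 ≤ t) :
    0 ≤ Psi w₁ w₂ α β x t :=
  add_nonneg (mul_nonneg hw₁ (Real.rpow_nonneg ht _))
    (mul_nonneg hw₂ (Real.rpow_nonneg ht _))

private lemma BL_psi_zero {N : ℕ} {w₁ w₂ α β : Euc N → ℝ}
    {x : Euc N} (hα : 0 < α x) (hβ : 0 < β x) :
    Psi w₁ w₂ α β x 0 = 0 := by
  simp [Psi, Real.zero_rpow hα.ne', Real.zero_rpow hβ.ne']

private lemma BL_psi_tendsto {N : ℕ} {w₁ w₂ α β : Euc N → ℝ}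
    {x : Euc N} (hα : 0 < α x) (hβ : 0 < β x)
    {c : ℕ → ℝ} {l : ℝ} (h : Tendsto c atTop (𝓝 l)) :
    Tendsto (fun n => Psi w₁ w₂ α β x |c n|) atTop (𝓝 (Psi w₁ w₂ α β x |l|)) := by
  simp only [Psi]
  have habs : Tendsto (fun n => |c n|) atTop (𝓝 |l|) := h.abs
  have t1 : Tendsto (fun n => (|c n|) ^ α x) atTop (𝓝 ((|l|) ^ α x)) :=
    ((Real.continuousAt_rpow_const _ _ (Or.inr hα.le)).tendsto).comp habs
  have t2 : Tendsto (fun n => (|c n|) ^ β x) atTop (𝓝 ((|l|) ^ β x)) :=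
    ((Real.continuousAt_rpow_const _ _ (Or.inr hβ.le)).tendsto).comp habs
  exact (t1.const_mul _).add (t2.const_mul _)



/-- the Brezis–Lieb lemma in `L^Ψ(Ω)`. -/
theorem statement3 {N : ℕ} (Ω : Set (Euc N)) (w₁ w₂ α β : Euc N → ℝ)
    (hset : PsiSetting Ω w₁ w₂ α β)
    (fn : ℕ → Euc N → ℝ) (f : Euc N → ℝ)
    (hfn_meas : ∀ n, AEMeasurable (fn n) (volume.restrict Ω))
    (hf_meas : AEMeasurable f (volume.restrict Ω))
    (hfn_mem : ∀ n, psiMod Ω w₁ w₂ α β (fn n) < ⊤)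
    (hbdd : ∃ M : ℝ, ∀ n, psiNorm Ω w₁ w₂ α β (fn n) ≤ M)
    (hae : ∀ᵐ x ∂volume.restrict Ω, Tendsto (fun n => fn n x) atTop (𝓝 (f x))) :
    psiMod Ω w₁ w₂ α β f < ⊤ ∧
    Tendsto (fun n => ∫⁻ x in Ω, ENNReal.ofReal
        |Psi w₁ w₂ α β x (|fn n x|) - Psi w₁ w₂ α β x (|fn n x - f x|) - Psi w₁ w₂ α β x (|f x|)|)
      atTop (𝓝 0) := by
  classical
  have hΩm : MeasurableSet Ω := hset.isOpen.measurableSet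
  obtain ⟨mα, hmα1, hmα⟩ := hset.α_lb
  obtain ⟨Mα, hMα⟩ := hset.α_ub
  obtain ⟨mβ, hmβ1, hmβ⟩ := hset.β_lb
  obtain ⟨Mβ, hMβ⟩ := hset.β_ub
  set P : ℝ := max 1 (max Mα Mβ) with hPdef
  have hP1 : (1:ℝ) ≤ P := le_max_left _ _
  have hexp : ∀ x ∈ Ω, 1 ≤ α x ∧ α x ≤ P ∧ 1 ≤ β x ∧ β x ≤ P := by
    intro x hx
    have hx' : x ∈ closure Ω := subset_closure hx
    exact ⟨hmα1.le.trans (hmα x hx'),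
      (hMα x hx').trans (le_max_of_le_right (le_max_left _ _)),
      hmβ1.le.trans (hmβ x hx'),
      (hMβ x hx').trans (le_max_of_le_right (le_max_right _ _))⟩
  have hG : ∀ᵐ x ∂(volume.restrict Ω), x ∈ Ω ∧ 0 < w₁ x ∧ 0 ≤ w₂ x :=
    (ae_restrict_mem hΩm).and (hset.w₁_pos.and hset.w₂_nonneg)
  have hαm : AEMeasurable α (volume.restrict Ω) :=
    (hset.α_cont.mono subset_closure).aemeasurable hΩm
  have hβm : AEMeasurable β (volume.restrict Ω) :=
    (hset.β_cont.mono subset_closure).aemeasurable hΩm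
  have hPsiM : ∀ u : Euc N → ℝ, AEMeasurable u (volume.restrict Ω) →
      AEMeasurable (fun x => Psi w₁ w₂ α β x |u x|) (volume.restrict Ω) := by
    intro u hu
    have hu' : AEMeasurable (fun x => |u x|) (volume.restrict Ω) :=
      continuous_abs.measurable.comp_aemeasurable hu
    have : AEMeasurable (fun x => w₁ x * |u x| ^ α x + w₂ x * |u x| ^ β x)
        (volume.restrict Ω) :=
      (hset.w₁_meas.mul (hu'.pow hαm)).add (hset.w₂_meas.mul (hu'.pow hβm))
    simpa [Psi] using this
  have hPsiM' : ∀ u : Euc N → ℝ, AEMeasurable u (volume.restrict Ω) →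
      AEMeasurable (fun x => ENNReal.ofReal (Psi w₁ w₂ α β x |u x|)) (volume.restrict Ω) :=
    fun u hu => ENNReal.measurable_ofReal.comp_aemeasurable (hPsiM u hu)
  obtain ⟨M, hM⟩ := hbdd
  set M' : ℝ := max M 0 + 1 with hM'def
  have hM'1 : (1:ℝ) ≤ M' := by
    have := le_max_right M 0; simp only [hM'def]; linarith
  have hMM' : M < M' := by
    have := le_max_left M 0; simp only [hM'def]; linarith
  set B₀ : ℝ≥0∞ := ENNReal.ofReal (M' ^ P) with hB₀def
  -- uniform bound on the modulars of fn
  have hρ_le : ∀ u : Euc N → ℝ, AEMeasurable u (volume.restrict Ω) →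
      psiMod Ω w₁ w₂ α β u < ⊤ → psiNorm Ω w₁ w₂ α β u ≤ M →
      psiMod Ω w₁ w₂ α β u ≤ B₀ := by
    intro u hu hfin hnorm
    set S : Set ℝ := {τ : ℝ | 0 < τ ∧
      (∫⁻ x in Ω, ENNReal.ofReal (Psi w₁ w₂ α β x (|u x| / τ))) ≤ 1} with hSdef
    have hSb : BddBelow S := ⟨0, fun τ hτ => hτ.1.le⟩
    have hSne : S.Nonempty := by
      set R : ℝ := (psiMod Ω w₁ w₂ α β u).toReal with hR
      have hR0 : 0 ≤ R := ENNReal.toReal_nonneg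
      have hτ1 : (1:ℝ) ≤ R + 1 := by linarith
      refine ⟨R + 1, by linarith, ?_⟩
      have step : (∫⁻ x in Ω, ENNReal.ofReal (Psi w₁ w₂ α β x (|u x| / (R + 1))))
          ≤ ∫⁻ x in Ω, ENNReal.ofReal (1 / (R + 1)) *
              ENNReal.ofReal (Psi w₁ w₂ α β x |u x|) := by
        refine lintegral_mono_ae ?_
        filter_upwards [hG] with x hx
        obtain ⟨hxΩ, hw₁, hw₂⟩ := hx
        obtain ⟨h1, _, h3, _⟩ := hexp x hxΩ
        rw [← ENNReal.ofReal_mul (div_nonneg zero_le_one (by linarith))]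
        exact ENNReal.ofReal_le_ofReal
          (BL_psi_scale_down hw₁.le hw₂ h1 h3 (abs_nonneg _) hτ1)
      rw [lintegral_const_mul' _ _ ENNReal.ofReal_ne_top] at step
      refine step.trans ?_
      have hmod : (∫⁻ x in Ω, ENNReal.ofReal (Psi w₁ w₂ α β x |u x|))
          = ENNReal.ofReal R := by
        rw [hR]; exact (ENNReal.ofReal_toReal hfin.ne).symm
      rw [hmod, ← ENNReal.ofReal_mul (div_nonneg zero_le_one (by linarith))]
      refine ENNReal.ofReal_le_one.mpr ?_
      rw [show 1 / (R + 1) * R = R / (R + 1) by ring]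
      exact div_le_one_of_le₀ (by linarith) (by linarith)
    have hlt : sInf S < M' := by
      have hnorm' : sInf S ≤ M := by
        have : psiNorm Ω w₁ w₂ α β u = sInf S := by
          simp only [psiNorm, luxNorm, hSdef]
        rwa [this] at hnorm
      exact lt_of_le_of_lt hnorm' hMM'
    obtain ⟨τ, hτS, hτM⟩ := (csInf_lt_iff hSb hSne).mp hlt
    obtain ⟨hτ0, hτint⟩ := hτS
    have hmax0 : (0:ℝ) ≤ max τ 1 := le_trans zero_le_one (le_max_right τ 1)
    have main : psiMod Ω w₁ w₂ α β u
        ≤ ∫⁻ x in Ω, ENNReal.ofReal ((max τ 1) ^ P) *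
            ENNReal.ofReal (Psi w₁ w₂ α β x (|u x| / τ)) := by
      refine lintegral_mono_ae ?_
      filter_upwards [hG] with x hx
      obtain ⟨hxΩ, hw₁, hw₂⟩ := hx
      obtain ⟨h1, h2, h3, h4⟩ := hexp x hxΩ
      rw [← ENNReal.ofReal_mul (Real.rpow_nonneg hmax0 _)]
      exact ENNReal.ofReal_le_ofReal
        (BL_psi_scale_up hw₁.le hw₂ h1 h2 h3 h4 (abs_nonneg _) hτ0)
    rw [lintegral_const_mul' _ _ ENNReal.ofReal_ne_top] at main
    refine main.trans ?_
    calc ENNReal.ofReal ((max τ 1) ^ P) *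
          (∫⁻ x in Ω, ENNReal.ofReal (Psi w₁ w₂ α β x (|u x| / τ)))
        ≤ ENNReal.ofReal ((max τ 1) ^ P) * 1 := mul_le_mul_right hτint _
      _ ≤ B₀ := by
          rw [mul_one, hB₀def]
          exact ENNReal.ofReal_le_ofReal
            (Real.rpow_le_rpow hmax0 (max_le hτM.le hM'1) (by linarith))
  have hB₀fn : ∀ n, psiMod Ω w₁ w₂ α β (fn n) ≤ B₀ :=
    fun n => hρ_le _ (hfn_meas n) (hfn_mem n) (hM n)
  -- part 1 : the modular of f is finite
  have hten : ∀ᵐ x ∂(volume.restrict Ω),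
      Tendsto (fun n => ENNReal.ofReal (Psi w₁ w₂ α β x |fn n x|)) atTop
        (𝓝 (ENNReal.ofReal (Psi w₁ w₂ α β x |f x|))) := by
    filter_upwards [hae, hG] with x hx hg
    obtain ⟨hxΩ, _, _⟩ := hg
    obtain ⟨h1, _, h3, _⟩ := hexp x hxΩ
    exact (ENNReal.continuous_ofReal.tendsto _).comp
      (BL_psi_tendsto (by linarith) (by linarith) hx)
  have hffin : psiMod Ω w₁ w₂ α β f ≤ B₀ := by
    have heq : psiMod Ω w₁ w₂ α β f
        = ∫⁻ x in Ω, liminf (fun n => ENNReal.ofReal (Psi w₁ w₂ α β x |fn n x|)) atTop := by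
      refine lintegral_congr_ae ?_
      filter_upwards [hten] with x hx
      exact hx.liminf_eq.symm
    rw [heq]
    refine (lintegral_liminf_le' (fun n => hPsiM' _ (hfn_meas n))).trans ?_
    refine (liminf_le_liminf (Eventually.of_forall (fun n => hB₀fn n))).trans ?_
    simp [liminf_const]
  have part1 : psiMod Ω w₁ w₂ α β f < ⊤ := hffin.trans_lt ENNReal.ofReal_lt_top
  -- bound on the modulars of fn - f
  set C₂ : ℝ := (2:ℝ) ^ (2 * P) + ((2:ℝ) ^ P + 1) * (2:ℝ) ^ P with hC₂def
  have h2P0 : (0:ℝ) ≤ (2:ℝ) ^ (2 * P) := Real.rpow_nonneg (by norm_num) _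
  have h2P0' : (0:ℝ) ≤ ((2:ℝ) ^ P + 1) * (2:ℝ) ^ P :=
    mul_nonneg (by positivity) (Real.rpow_nonneg (by norm_num) _)
  have hC₂0 : 0 ≤ C₂ := by rw [hC₂def]; linarith
  have hpt : ∀ x, x ∈ Ω → 0 < w₁ x → 0 ≤ w₂ x → ∀ u v : ℝ,
      Psi w₁ w₂ α β x (|u + v|) ≤ C₂ * (Psi w₁ w₂ α β x (|u|) + Psi w₁ w₂ α β x (|v|)) := by
    intro x hxΩ hw₁ hw₂ u v
    obtain ⟨h1, h2, h3, h4⟩ := hexp x hxΩ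
    have hd := BL_psi_diff (u := u) (v := v) (w₁ := w₁) (w₂ := w₂) (α := α) (β := β)
      hw₁.le hw₂ h1 h2 h3 h4 one_pos
    norm_num at hd
    have hnn1 : 0 ≤ Psi w₁ w₂ α β x (|u|) := BL_psi_nonneg hw₁.le hw₂ (abs_nonneg _)
    have hnn2 : 0 ≤ Psi w₁ w₂ α β x (|v|) := BL_psi_nonneg hw₁.le hw₂ (abs_nonneg _)
    have hu := le_of_abs_le hd
    have e1 := mul_nonneg h2P0' hnn1
    have e2 := mul_nonneg h2P0 hnn2
    rw [hC₂def]
    nlinarith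
  set B₁ : ℝ≥0∞ := ENNReal.ofReal C₂ * (B₀ + B₀) with hB₁def
  have hB₁top : B₁ ≠ ⊤ := by
    rw [hB₁def, hB₀def]
    exact ENNReal.mul_ne_top ENNReal.ofReal_ne_top
      (ENNReal.add_ne_top.mpr ⟨ENNReal.ofReal_ne_top, ENNReal.ofReal_ne_top⟩)
  have hρg : ∀ n, psiMod Ω w₁ w₂ α β (fun x => fn n x - f x) ≤ B₁ := by
    intro n
    have step1 : psiMod Ω w₁ w₂ α β (fun x => fn n x - f x) ≤
        ∫⁻ x in Ω, ENNReal.ofReal C₂ *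
          (ENNReal.ofReal (Psi w₁ w₂ α β x |fn n x|)
            + ENNReal.ofReal (Psi w₁ w₂ α β x |f x|)) := by
      refine lintegral_mono_ae ?_
      filter_upwards [hG] with x hx
      obtain ⟨hxΩ, hw₁, hw₂⟩ := hx
      have h := hpt x hxΩ hw₁ hw₂ (fn n x) (-f x)
      rw [show fn n x + -f x = fn n x - f x by ring, abs_neg] at h
      calc ENNReal.ofReal (Psi w₁ w₂ α β x |fn n x - f x|)
          ≤ ENNReal.ofReal (C₂ * (Psi w₁ w₂ α β x |fn n x| + Psi w₁ w₂ α β x |f x|)) :=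
            ENNReal.ofReal_le_ofReal h
        _ = ENNReal.ofReal C₂ *
              ENNReal.ofReal (Psi w₁ w₂ α β x |fn n x| + Psi w₁ w₂ α β x |f x|) :=
            ENNReal.ofReal_mul hC₂0
        _ ≤ ENNReal.ofReal C₂ *
              (ENNReal.ofReal (Psi w₁ w₂ α β x |fn n x|)
                + ENNReal.ofReal (Psi w₁ w₂ α β x |f x|)) :=
            mul_le_mul_right ENNReal.ofReal_add_le _
    refine step1.trans ?_
    rw [lintegral_const_mul' _ _ ENNReal.ofReal_ne_top,
      lintegral_add_left' (hPsiM' _ (hfn_meas n))]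
    exact mul_le_mul_right (add_le_add (hB₀fn n) hffin) _
  refine ⟨part1, ?_⟩
  -- the Brezis-Lieb limit
  set D : ℕ → Euc N → ℝ := fun n x =>
    Psi w₁ w₂ α β x (|fn n x|) - Psi w₁ w₂ α β x (|fn n x - f x|)
      - Psi w₁ w₂ α β x (|f x|) with hDdef
  show Tendsto (fun n => ∫⁻ x in Ω, ENNReal.ofReal |D n x|) atTop (𝓝 0)
  set I : ℕ → ℝ≥0∞ := fun n => ∫⁻ x in Ω, ENNReal.ofReal |D n x| with hIdef
  have key : ∀ ε : ℝ, 0 < ε → limsup I atTop ≤ ENNReal.ofReal ε * B₁ := by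
    intro ε hε
    have h2P : (0:ℝ) < 2 * P := by linarith
    set ε₀ : ℝ := (1 + ε) ^ (1 / (2 * P)) - 1 with hε₀def
    have hε₀pos : 0 < ε₀ := by
      have h : 1 < (1 + ε) ^ (1 / (2 * P)) :=
        (Real.one_lt_rpow_iff_of_pos (by linarith)).mpr
          (Or.inl ⟨by linarith, by positivity⟩)
      rw [hε₀def]; linarith
    have hεpow : (1 + ε₀) ^ (2 * P) = 1 + ε := by
      have h1 : 1 + ε₀ = (1 + ε) ^ (1 / (2 * P)) := by rw [hε₀def]; ring
      rw [h1, ← Real.rpow_mul (by linarith : (0:ℝ) ≤ 1 + ε), one_div,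
        inv_mul_cancel₀ h2P.ne', Real.rpow_one]
    set C : ℝ := ((1 + ε₀) ^ P + 1) * (1 + 1 / ε₀) ^ P with hCdef
    have hC0 : 0 ≤ C := by
      rw [hCdef]
      exact mul_nonneg (by positivity) (Real.rpow_nonneg (by positivity) _)
    set W : ℕ → Euc N → ℝ := fun n x =>
      max (|D n x| - ε * Psi w₁ w₂ α β x (|fn n x - f x|)) 0 with hWdef
    have hWbd : ∀ n, ∀ᵐ x ∂(volume.restrict Ω),
        ENNReal.ofReal (W n x)
          ≤ ENNReal.ofReal ((C + 1) * Psi w₁ w₂ α β x (|f x|)) := by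
      intro n
      filter_upwards [hG] with x hx
      obtain ⟨hxΩ, hw₁, hw₂⟩ := hx
      obtain ⟨h1, h2, h3, h4⟩ := hexp x hxΩ
      refine ENNReal.ofReal_le_ofReal ?_
      have hnnf : 0 ≤ Psi w₁ w₂ α β x (|f x|) := BL_psi_nonneg hw₁.le hw₂ (abs_nonneg _)
      refine max_le ?_ (mul_nonneg (by linarith) hnnf)
      have hd := BL_psi_diff (u := fn n x - f x) (v := f x) (w₁ := w₁) (w₂ := w₂)
        (α := α) (β := β) hw₁.le hw₂ h1 h2 h3 h4 hε₀pos
      rw [sub_add_cancel, hεpow, show (1:ℝ) + ε - 1 = ε by ring, ← hCdef] at hd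
      have habs : |D n x| ≤ |Psi w₁ w₂ α β x (|fn n x|)
          - Psi w₁ w₂ α β x (|fn n x - f x|)| + Psi w₁ w₂ α β x (|f x|) := by
        have h5 := abs_add_le (Psi w₁ w₂ α β x (|fn n x|)
          - Psi w₁ w₂ α β x (|fn n x - f x|)) (-(Psi w₁ w₂ α β x (|f x|)))
        rw [abs_neg, abs_of_nonneg hnnf] at h5
        calc |D n x| = |Psi w₁ w₂ α β x (|fn n x|)
              - Psi w₁ w₂ α β x (|fn n x - f x|) + -(Psi w₁ w₂ α β x (|f x|))| := by
              rw [hDdef]; ring_nf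
          _ ≤ _ := h5
      have hd' := le_of_abs_le hd
      linarith
    have hWm : ∀ n, AEMeasurable (fun x => ENNReal.ofReal (W n x)) (volume.restrict Ω) := by
      intro n
      refine ENNReal.measurable_ofReal.comp_aemeasurable ?_
      have hg : AEMeasurable (fun x => fn n x - f x) (volume.restrict Ω) :=
        (hfn_meas n).sub hf_meas
      have hDm : AEMeasurable (fun x => D n x) (volume.restrict Ω) := by
        refine ((hPsiM _ (hfn_meas n)).sub (hPsiM _ hg)).sub (hPsiM _ hf_meas)
      refine AEMeasurable.max ?_ aemeasurable_const
      exact (continuous_abs.measurable.comp_aemeasurable hDm).sub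
        ((hPsiM _ hg).const_mul ε)
    have hW0 : ∀ᵐ x ∂(volume.restrict Ω),
        Tendsto (fun n => ENNReal.ofReal (W n x)) atTop (𝓝 0) := by
      filter_upwards [hae, hG] with x hx hg
      obtain ⟨hxΩ, hw₁, hw₂⟩ := hg
      obtain ⟨h1, _, h3, _⟩ := hexp x hxΩ
      have ha0 : 0 < α x := by linarith
      have hb0 : 0 < β x := by linarith
      have t1 : Tendsto (fun n => Psi w₁ w₂ α β x (|fn n x|)) atTop
          (𝓝 (Psi w₁ w₂ α β x (|f x|))) := BL_psi_tendsto ha0 hb0 hx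
      have hg0 : Tendsto (fun n => fn n x - f x) atTop (𝓝 0) := by
        simpa using hx.sub (tendsto_const_nhds (x := f x))
      have t2 : Tendsto (fun n => Psi w₁ w₂ α β x (|fn n x - f x|)) atTop (𝓝 0) := by
        have h := BL_psi_tendsto (w₁ := w₁) (w₂ := w₂) ha0 hb0 hg0
        simpa [abs_zero, BL_psi_zero ha0 hb0] using h
      have tD : Tendsto (fun n => |D n x|) atTop (𝓝 0) := by
        have hDl : Tendsto (fun n => D n x) atTop (𝓝 0) := by
          have h := (t1.sub t2).sub (tendsto_const_nhds (x := Psi w₁ w₂ α β x (|f x|)))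
          simpa [hDdef] using h
        simpa [abs_zero] using hDl.abs
      have tW : Tendsto (fun n => W n x) atTop (𝓝 0) := by
        have hsub : Tendsto
            (fun n => |D n x| - ε * Psi w₁ w₂ α β x (|fn n x - f x|)) atTop (𝓝 0) := by
          simpa using tD.sub (t2.const_mul ε)
        have := hsub.max (tendsto_const_nhds (x := (0:ℝ)))
        simpa [hWdef] using this
      have := (ENNReal.continuous_ofReal.tendsto 0).comp tW
      simpa [Function.comp_def] using this
    have hdom : Tendsto (fun n => ∫⁻ x in Ω, ENNReal.ofReal (W n x)) atTop (𝓝 0) := by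
      have hfin : (∫⁻ x in Ω, ENNReal.ofReal ((C + 1) * Psi w₁ w₂ α β x (|f x|))) ≠ ⊤ := by
        have heq : (∫⁻ x in Ω, ENNReal.ofReal ((C + 1) * Psi w₁ w₂ α β x (|f x|)))
            = ENNReal.ofReal (C + 1) * psiMod Ω w₁ w₂ α β f := by
          simp only [psiMod]
          rw [← lintegral_const_mul' _ _ ENNReal.ofReal_ne_top]
          congr 1
          funext x
          rw [← ENNReal.ofReal_mul (by linarith)]
        rw [heq]
        exact ENNReal.mul_ne_top ENNReal.ofReal_ne_top part1.ne
      have h := tendsto_lintegral_of_dominated_convergence' _ hWm hWbd hfin hW0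
      simpa using h
    have hIle : ∀ n, I n ≤ (∫⁻ x in Ω, ENNReal.ofReal (W n x)) + ENNReal.ofReal ε * B₁ := by
      intro n
      have step : I n ≤ ∫⁻ x in Ω, (ENNReal.ofReal (W n x)
          + ENNReal.ofReal (ε * Psi w₁ w₂ α β x (|fn n x - f x|))) := by
        refine lintegral_mono_ae ?_
        filter_upwards [hG] with x hx
        have hle : |D n x| ≤ W n x + ε * Psi w₁ w₂ α β x (|fn n x - f x|) := by
          have := le_max_left (|D n x| - ε * Psi w₁ w₂ α β x (|fn n x - f x|)) 0
          rw [hWdef]; linarith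
        calc ENNReal.ofReal |D n x|
            ≤ ENNReal.ofReal (W n x + ε * Psi w₁ w₂ α β x (|fn n x - f x|)) :=
              ENNReal.ofReal_le_ofReal hle
          _ ≤ _ := ENNReal.ofReal_add_le
      refine step.trans ?_
      rw [lintegral_add_left' (hWm n)]
      refine add_le_add_right ?_ _
      have heq2 : (∫⁻ x in Ω, ENNReal.ofReal (ε * Psi w₁ w₂ α β x (|fn n x - f x|)))
          = ENNReal.ofReal ε * psiMod Ω w₁ w₂ α β (fun x => fn n x - f x) := by
        simp only [psiMod]
        rw [← lintegral_const_mul' _ _ ENNReal.ofReal_ne_top]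
        congr 1
        funext x
        rw [← ENNReal.ofReal_mul hε.le]
      rw [heq2]
      exact mul_le_mul_right (hρg n) _
    refine (limsup_le_limsup (Eventually.of_forall hIle)).trans ?_
    have htend : Tendsto (fun n => (∫⁻ x in Ω, ENNReal.ofReal (W n x))
        + ENNReal.ofReal ε * B₁) atTop (𝓝 (0 + ENNReal.ofReal ε * B₁)) :=
      hdom.add tendsto_const_nhds
    rw [zero_add] at htend
    exact htend.limsup_eq.le
  have hsup : limsup I atTop = 0 := by
    refine le_antisymm ?_ zero_le
    refine ENNReal.le_of_forall_pos_le_add fun δ hδ _ => ?_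
    rw [zero_add]
    set Br : ℝ := B₁.toReal with hBrdef
    have hBr0 : 0 ≤ Br := ENNReal.toReal_nonneg
    have hδ' : (0:ℝ) < (δ : ℝ) := hδ
    have hεδ : 0 < (δ : ℝ) / (Br + 1) := by positivity
    refine (key _ hεδ).trans ?_
    have hB₁eq : B₁ = ENNReal.ofReal Br := by
      rw [hBrdef]; exact (ENNReal.ofReal_toReal hB₁top).symm
    rw [hB₁eq, ← ENNReal.ofReal_mul hεδ.le]
    calc ENNReal.ofReal ((δ : ℝ) / (Br + 1) * Br)
        ≤ ENNReal.ofReal (δ : ℝ) := by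
          refine ENNReal.ofReal_le_ofReal ?_
          rw [div_mul_eq_mul_div]
          refine (div_le_iff₀ (by linarith)).mpr ?_
          nlinarith
      _ = (δ : ℝ≥0∞) := ENNReal.ofReal_coe_nnreal
  have hinf : liminf I atTop = 0 :=
    le_antisymm (hsup ▸ liminf_le_limsup) zero_le
  exact tendsto_of_liminf_eq_limsup hinf hsup

end DoublePhase
end
end

section
/- Let p, q, d be real numbers with 1 < p ≤ q and 0 < q − p ≤ d, let a ≥ 0, and define H(t) := t^{p} + a t^{q} for t ≥ 0. Then for every ε > 0 and all real numbers t, η: H(|tη|) ≤ ε|t|^{p} + (1 + ε^{−d}) |η|^{q} H(|t|). -/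
open MeasureTheory Filter Topology Set NNReal ENNReal

noncomputable section

namespace DoublePhase

variable {N : ℕ}

/-- an elementary inequality for the double phase integrand. -/
theorem statement6 (p q d a : ℝ) (hp : 1 < p) (hpq : p ≤ q)
    (hqp : 0 < q - p) (hqpd : q - p ≤ d) (ha : 0 ≤ a)
    (ε : ℝ) (hε : 0 < ε) (t η : ℝ) :
    |t * η| ^ p + a * |t * η| ^ q
      ≤ ε * |t| ^ p + (1 + ε ^ (-d)) * |η| ^ q * (|t| ^ p + a * |t| ^ q) := by
  have hT : (0:ℝ) ≤ |t| := abs_nonneg t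
  have hE : (0:ℝ) ≤ |η| := abs_nonneg η
  set E := |η| with hEdef
  set T := |t| with hTdef
  have hinv : (0:ℝ) < ε ^ (-d) := Real.rpow_pos_of_pos hε _
  have hEq0 : 0 ≤ E ^ q := Real.rpow_nonneg hE q
  have key : E ^ p ≤ ε + (1 + ε ^ (-d)) * E ^ q := by
    rcases le_or_gt 1 ε with h1 | h1
    · rcases le_or_gt E 1 with hE1 | hE1
      · have h2 : E ^ p ≤ 1 := Real.rpow_le_one hE hE1 (by linarith)
        nlinarith
      · have h2 : E ^ p ≤ E ^ q :=
          Real.rpow_le_rpow_of_exponent_le hE1.le (by linarith)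
        nlinarith
    · rcases le_or_gt (E ^ p) ε with h | h
      · nlinarith
      · have hEpos : 0 < E := by
          by_contra hc
          push_neg at hc
          have hE0 : E = 0 := le_antisymm hc hE
          rw [hE0, Real.zero_rpow (by linarith : p ≠ (0:ℝ))] at h
          linarith
        have hεE : ε ^ (1 / p) < E := by
          have h3 := Real.rpow_lt_rpow hε.le h (by positivity : (0:ℝ) < 1 / p)
          rwa [← Real.rpow_mul hE, mul_one_div, div_self (by linarith : p ≠ 0),
            Real.rpow_one] at h3
        have h4 : ε ^ d ≤ ε ^ ((q - p) / p) :=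
          Real.rpow_le_rpow_of_exponent_ge hε h1.le
            (by rw [div_le_iff₀ (by linarith : (0:ℝ) < p)]; nlinarith)
        have h5 : ε ^ ((q - p) / p) < E ^ (q - p) := by
          have h6 := Real.rpow_lt_rpow (Real.rpow_nonneg hε.le _) hεE hqp
          rwa [← Real.rpow_mul hε.le, one_div, inv_mul_eq_div] at h6
        have h7 : ε ^ d < E ^ (q - p) := lt_of_le_of_lt h4 h5
        have h8 : (1:ℝ) ≤ ε ^ (-d) * E ^ (q - p) := by
          have h9 : ε ^ (-d) * ε ^ d = 1 := by
            rw [← Real.rpow_add hε]; simp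
          have := mul_le_mul_of_nonneg_left h7.le hinv.le
          linarith
        have h10 : E ^ p ≤ ε ^ (-d) * E ^ q := by
          have hq : E ^ q = E ^ (q - p) * E ^ p := by
            rw [← Real.rpow_add hEpos]; ring_nf
          rw [hq]
          have hEp : 0 ≤ E ^ p := Real.rpow_nonneg hE p
          nlinarith
        nlinarith
  have hTE : |t * η| = T * E := abs_mul t η
  rw [hTE, Real.mul_rpow hT hE, Real.mul_rpow hT hE]
  have hTp : 0 ≤ T ^ p := Real.rpow_nonneg hT p
  have hTq : 0 ≤ T ^ q := Real.rpow_nonneg hT q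
  have h1 : T ^ p * E ^ p ≤ T ^ p * (ε + (1 + ε ^ (-d)) * E ^ q) :=
    mul_le_mul_of_nonneg_left key hTp
  nlinarith [mul_nonneg (mul_nonneg ha hTq) hEq0,
    mul_nonneg (mul_nonneg hinv.le hEq0) (mul_nonneg ha hTq)]

end DoublePhase
end
end
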